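/- arXiv:math/0104104 — 2 statements merged into one kernel-verified Lean document; each statement's English description precedes it below -/
import Mathlib

section
/- In sp(2), the element Λ = E ∧ S_i ∧ S_j ∧ S_k ∈ ⋀^4 sp(2) is annihilated by the adjoint action of every element X of the diagonal subalgebra s = {diag(s₁,s₂) : s₁,s₂ purely imaginary quaternions}, i.e. ad_X Λ = [X,E]∧S_i∧S_j∧S_k + E∧[X,S_i]∧S_j∧S_k + E∧S_i∧[X,S_j]∧S_k + E∧S_i∧S_j∧[X,S_k] = 0. -/
set_option maxHeartbeats 1000000

open scoped Quaternion
open Matrix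

/-- The imaginary quaternion unit `i`. -/
def qi : ℍ[ℝ] := ⟨0, 1, 0, 0⟩
/-- The imaginary quaternion unit `j`. -/
def qj : ℍ[ℝ] := ⟨0, 0, 1, 0⟩
/-- The imaginary quaternion unit `k`. -/
def qk : ℍ[ℝ] := ⟨0, 0, 0, 1⟩

/-- The element `E = [[0,1],[-1,0]]` of `sp(2)`. -/
noncomputable def Esp : Matrix (Fin 2) (Fin 2) ℍ[ℝ] := !![0, 1; -1, 0]
/-- The element `S_x = [[0,x],[x,0]]` of `sp(2)`. -/
noncomputable def Ssp (x : ℍ[ℝ]) : Matrix (Fin 2) (Fin 2) ℍ[ℝ] := !![0, x; x, 0]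
/-- The element `H_x = [[x,0],[0,-x]]` of `sp(2)`. -/
noncomputable def Hsp (x : ℍ[ℝ]) : Matrix (Fin 2) (Fin 2) ℍ[ℝ] := !![x, 0; 0, -x]

open ExteriorAlgebra

lemma qproj : qi.re = 0 ∧ qi.imI = 1 ∧ qi.imJ = 0 ∧ qi.imK = 0 ∧
    qj.re = 0 ∧ qj.imI = 0 ∧ qj.imJ = 1 ∧ qj.imK = 0 ∧
    qk.re = 0 ∧ qk.imI = 0 ∧ qk.imJ = 0 ∧ qk.imK = 1 := by
  refine ⟨rfl, rfl, rfl, rfl, rfl, rfl, rfl, rfl, rfl, rfl, rfl, rfl⟩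

section helpers
variable {R M : Type*} [CommRing R] [AddCommGroup M] [Module R M]

lemma swap (x y : M) : ι R y * ι R x = -(ι R x * ι R y) := by
  have := ι_add_mul_swap (R := R) x y
  linear_combination (norm := noncomm_ring) this

lemma w1 (x y z : M) : ι R x * ι R x * ι R y * ι R z = 0 := by
  rw [ι_sq_zero, zero_mul, zero_mul]
lemma w2 (x y z : M) : ι R x * ι R y * ι R y * ι R z = 0 := by
  rw [mul_assoc (ι R x), ι_sq_zero, mul_zero, zero_mul]
lemma w3 (x y z : M) : ι R x * ι R y * ι R z * ι R z = 0 := by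
  rw [mul_assoc, ι_sq_zero, mul_zero]
lemma w4 (x y z : M) : ι R x * ι R y * ι R x * ι R z = 0 := by
  rw [mul_assoc (ι R x), _root_.swap]
  simp [← mul_assoc, ι_sq_zero]
lemma w5 (x y z : M) : ι R x * ι R y * ι R z * ι R x = 0 := by
  rw [mul_assoc, swap x z]
  simp [← mul_assoc, w4]
lemma w6 (x y z : M) : ι R x * ι R y * ι R z * ι R y = 0 := by
  rw [mul_assoc, swap y z]
  simp [← mul_assoc, w2]
end helpers

/-- In `sp(2)`, the element `Λ = E ∧ S_i ∧ S_j ∧ S_k ∈ ⋀⁴ sp(2)` (realized inside the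
exterior algebra of the space of `2×2` quaternionic matrices, where multiplication is
the wedge product) is annihilated by the adjoint action of every element
`X = diag(s₁,s₂)` of the diagonal subalgebra with `s₁, s₂` purely imaginary
quaternions; the adjoint action is extended to `⋀⁴ sp(2)` by the Leibniz rule:
`ad_X Λ = [X,E]∧S_i∧S_j∧S_k + E∧[X,S_i]∧S_j∧S_k + E∧S_i∧[X,S_j]∧S_k + E∧S_i∧S_j∧[X,S_k] = 0`. -/
theorem ad_spheroid_annihilates_Lambda (s₁ s₂ : ℍ[ℝ])
    (h₁ : s₁.re = 0) (h₂ : s₂.re = 0) :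
    letI X : Matrix (Fin 2) (Fin 2) ℍ[ℝ] := !![s₁, 0; 0, s₂]
    letI ι' := ExteriorAlgebra.ι ℝ (M := Matrix (Fin 2) (Fin 2) ℍ[ℝ])
    ι' ⁅X, Esp⁆ * ι' (Ssp qi) * ι' (Ssp qj) * ι' (Ssp qk)
      + ι' Esp * ι' ⁅X, Ssp qi⁆ * ι' (Ssp qj) * ι' (Ssp qk)
      + ι' Esp * ι' (Ssp qi) * ι' ⁅X, Ssp qj⁆ * ι' (Ssp qk)
      + ι' Esp * ι' (Ssp qi) * ι' (Ssp qj) * ι' ⁅X, Ssp qk⁆ = 0 := by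
  set X : Matrix (Fin 2) (Fin 2) ℍ[ℝ] := !![s₁, 0; 0, s₂] with hX
  have hE : ⁅X, Esp⁆ = (s₁.imI - s₂.imI) • Ssp qi + (s₁.imJ - s₂.imJ) • Ssp qj
      + (s₁.imK - s₂.imK) • Ssp qk := by
    refine Matrix.ext fun i j => ?_
    fin_cases i <;> fin_cases j <;>
      simp [hX, Esp, Ssp, qproj, Ring.lie_def, Matrix.mul_apply, Fin.sum_univ_two,
        Quaternion.ext_iff, Quaternion.re_mul, Quaternion.imI_mul, Quaternion.imJ_mul,
        Quaternion.imK_mul, h₁, h₂] <;> (repeat' apply And.intro) <;> first | trivial | ring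
  have hI : ⁅X, Ssp qi⁆ = (-(s₁.imI - s₂.imI)) • Esp + (s₁.imK + s₂.imK) • Ssp qj
      + (-(s₁.imJ + s₂.imJ)) • Ssp qk := by
    refine Matrix.ext fun i j => ?_
    fin_cases i <;> fin_cases j <;>
      simp [hX, Esp, Ssp, qproj, Ring.lie_def, Matrix.mul_apply, Fin.sum_univ_two,
        Quaternion.ext_iff, Quaternion.re_mul, Quaternion.imI_mul, Quaternion.imJ_mul,
        Quaternion.imK_mul, h₁, h₂] <;> (repeat' apply And.intro) <;> first | trivial | ring
  have hJ : ⁅X, Ssp qj⁆ = (-(s₁.imJ - s₂.imJ)) • Esp + (-(s₁.imK + s₂.imK)) • Ssp qi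
      + (s₁.imI + s₂.imI) • Ssp qk := by
    refine Matrix.ext fun i j => ?_
    fin_cases i <;> fin_cases j <;>
      simp [hX, Esp, Ssp, qproj, Ring.lie_def, Matrix.mul_apply, Fin.sum_univ_two,
        Quaternion.ext_iff, Quaternion.re_mul, Quaternion.imI_mul, Quaternion.imJ_mul,
        Quaternion.imK_mul, h₁, h₂] <;> (repeat' apply And.intro) <;> first | trivial | ring
  have hK : ⁅X, Ssp qk⁆ = (-(s₁.imK - s₂.imK)) • Esp + (s₁.imJ + s₂.imJ) • Ssp qi
      + (-(s₁.imI + s₂.imI)) • Ssp qj := by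
    refine Matrix.ext fun i j => ?_
    fin_cases i <;> fin_cases j <;>
      simp [hX, Esp, Ssp, qproj, Ring.lie_def, Matrix.mul_apply, Fin.sum_univ_two,
        Quaternion.ext_iff, Quaternion.re_mul, Quaternion.imI_mul, Quaternion.imJ_mul,
        Quaternion.imK_mul, h₁, h₂] <;> (repeat' apply And.intro) <;> first | trivial | ring
  rw [hE, hI, hJ, hK]
  simp only [map_add, _root_.map_smul, map_neg, add_mul, mul_add, smul_mul_assoc,
    mul_smul_comm, neg_mul, mul_neg, w1, w2, w3, w4, w5, w6, smul_zero, neg_zero,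
    add_zero, zero_add]
end

section
/- For w ∈ Sₙ, the set V_w = {V upper unitriangular over ℍ : (P_w V P_w⁻¹)ᵗ is upper unitriangular} is a subgroup of the group of upper unitriangular quaternionic matrices, and its dimension as a real manifold is 4·ℓ(w). -/
open scoped Quaternion
open Matrix

/-- The permutation matrix `P_w` with `(P_w)_{i,j} = δ_{i,w(j)}`. -/
noncomputable def permMat (n : ℕ) (w : Equiv.Perm (Fin n)) : Matrix (Fin n) (Fin n) ℍ[ℝ] :=
  Matrix.of fun i j => if i = w j then 1 else 0

/-- The length `ℓ(w)` of a permutation `w`: the number of pairs `p < q` with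
`w⁻¹(p) > w⁻¹(q)` (equivalently, the minimal number of adjacent transpositions
needed to express `w`). -/
def lenPerm (n : ℕ) (w : Equiv.Perm (Fin n)) : ℕ :=
  (Finset.univ.filter fun pq : Fin n × Fin n =>
    pq.1 < pq.2 ∧ w⁻¹ pq.2 < w⁻¹ pq.1).card

section Aux

variable (n : ℕ) (w : Equiv.Perm (Fin n))

/-- The submodule of matrices supported on the inversion positions of `w`. -/
def Wmod : Submodule ℝ (Matrix (Fin n) (Fin n) ℍ[ℝ]) where
  carrier := {A | ∀ a b : Fin n, ¬(a < b ∧ w b < w a) → A a b = 0}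
  add_mem' := by
    intro A B hA hB a b h
    simp only [Matrix.add_apply, hA a b h, hB a b h, add_zero]
  zero_mem' := by intro a b _; rfl
  smul_mem' := by
    intro c A hA a b h
    simp only [Matrix.smul_apply, hA a b h, smul_zero]

variable {n w}

lemma mem_Wmod {A : Matrix (Fin n) (Fin n) ℍ[ℝ]} :
    A ∈ Wmod n w ↔ ∀ a b : Fin n, ¬(a < b ∧ w b < w a) → A a b = 0 := Iff.rfl

lemma Wmod_mul {A B : Matrix (Fin n) (Fin n) ℍ[ℝ]}
    (hA : A ∈ Wmod n w) (hB : B ∈ Wmod n w) : A * B ∈ Wmod n w := by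
  intro a c h
  rw [Matrix.mul_apply]
  apply Finset.sum_eq_zero
  intro b _
  by_cases hab : a < b ∧ w b < w a
  · by_cases hbc : b < c ∧ w c < w b
    · exact absurd ⟨hab.1.trans hbc.1, hbc.2.trans hab.2⟩ h
    · rw [hB b c hbc, mul_zero]
  · rw [hA a b hab, zero_mul]

lemma Wmod_pow {A : Matrix (Fin n) (Fin n) ℍ[ℝ]} (hA : A ∈ Wmod n w) (k : ℕ) :
    A ^ (k + 1) ∈ Wmod n w := by
  induction k with
  | zero => simpa using hA
  | succ k ih => rw [pow_succ]; exact Wmod_mul ih hA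

lemma Wmod_strictUpper {A : Matrix (Fin n) (Fin n) ℍ[ℝ]} (hA : A ∈ Wmod n w)
    {a b : Fin n} (h : ¬ a < b) : A a b = 0 :=
  hA a b (fun h' => h h'.1)

lemma strictUpper_pow {A : Matrix (Fin n) (Fin n) ℍ[ℝ]}
    (hA : ∀ a b : Fin n, ¬ a < b → A a b = 0) :
    ∀ (k : ℕ) (a b : Fin n), (b : ℕ) < (a : ℕ) + k → (A ^ k) a b = 0 := by
  intro k
  induction k with
  | zero =>
    intro a b h
    have hne : a ≠ b := by rintro rfl; omega
    rw [pow_zero, Matrix.one_apply_ne hne]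
  | succ k ih =>
    intro a b h
    rw [pow_succ, Matrix.mul_apply]
    apply Finset.sum_eq_zero
    intro c _
    by_cases hc : (c : ℕ) < (a : ℕ) + k
    · rw [ih a c hc, zero_mul]
    · rw [hA c b (by rw [Fin.lt_def]; omega), mul_zero]

lemma strictUpper_nilpotent {A : Matrix (Fin n) (Fin n) ℍ[ℝ]}
    (hA : ∀ a b : Fin n, ¬ a < b → A a b = 0) : A ^ n = 0 := by
  refine Matrix.ext fun a b => ?_
  rw [strictUpper_pow hA n a b (by omega), Matrix.zero_apply]

lemma Wmod_inv {g : (Matrix (Fin n) (Fin n) ℍ[ℝ])ˣ} (hg : g.val - 1 ∈ Wmod n w) :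
    (g⁻¹).val - 1 ∈ Wmod n w := by
  set A : Matrix (Fin n) (Fin n) ℍ[ℝ] := g.val - 1 with hAdef
  set B : Matrix (Fin n) (Fin n) ℍ[ℝ] := (g⁻¹).val - 1 with hBdef
  set C : Matrix (Fin n) (Fin n) ℍ[ℝ] := -A with hCdef
  have hC : C ∈ Wmod n w := (Wmod n w).neg_mem hg
  have hgi : g.val * (g⁻¹).val = 1 := g.mul_inv
  have key : B = C + C * B := by
    rw [hBdef, hCdef, hAdef]
    rw [neg_sub, sub_mul, one_mul, mul_sub, mul_one, hgi]
    abel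
  have iter : ∀ m : ℕ, B = (∑ k ∈ Finset.range m, C ^ (k + 1)) + C ^ m * B := by
    intro m
    induction m with
    | zero => simp
    | succ m ih =>
      calc B = (∑ k ∈ Finset.range m, C ^ (k + 1)) + C ^ m * B := ih
      _ = (∑ k ∈ Finset.range m, C ^ (k + 1)) + C ^ m * (C + C * B) := by rw [← key]
      _ = (∑ k ∈ Finset.range (m + 1), C ^ (k + 1)) + C ^ (m + 1) * B := by
          rw [Finset.sum_range_succ, mul_add, pow_succ]
          noncomm_ring
  have hCn : C ^ n = 0 := strictUpper_nilpotent (fun a b h => Wmod_strictUpper hC h)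
  have hB : B = ∑ k ∈ Finset.range n, C ^ (k + 1) := by
    rw [iter n, hCn, zero_mul, add_zero]
  rw [hB]
  exact Submodule.sum_mem _ (fun k _ => Wmod_pow hC k)

variable (n w)

/-- The subgroup `V_w`. -/
noncomputable def Hgrp : Subgroup (Matrix (Fin n) (Fin n) ℍ[ℝ])ˣ where
  carrier := {g | g.val - 1 ∈ Wmod n w}
  one_mem' := by
    show (1 : Matrix (Fin n) (Fin n) ℍ[ℝ]) - 1 ∈ Wmod n w
    rw [sub_self]; exact (Wmod n w).zero_mem
  mul_mem' := by
    intro a b ha hb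
    show (a * b).val - 1 ∈ Wmod n w
    have : (a * b).val - 1 = (a.val - 1) + (b.val - 1) + (a.val - 1) * (b.val - 1) := by
      rw [Units.val_mul]; noncomm_ring
    rw [this]
    exact (Wmod n w).add_mem ((Wmod n w).add_mem ha hb) (Wmod_mul ha hb)
  inv_mem' := by
    intro g hg
    exact Wmod_inv hg

variable {n w}

lemma mem_Hgrp {g : (Matrix (Fin n) (Fin n) ℍ[ℝ])ˣ} :
    g ∈ Hgrp n w ↔ g.val - 1 ∈ Wmod n w := Iff.rfl

lemma permMat_mul_apply (M : Matrix (Fin n) (Fin n) ℍ[ℝ]) (i j : Fin n) :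
    (permMat n w * M) i j = M (w⁻¹ i) j := by
  rw [Matrix.mul_apply]
  rw [Finset.sum_eq_single (w⁻¹ i)]
  · simp [permMat]
  · intro b _ hb
    simp only [permMat, Matrix.of_apply, ite_mul, one_mul, zero_mul, ite_eq_right_iff]
    intro h
    exact absurd (by rw [h, Equiv.Perm.coe_inv, Equiv.symm_apply_apply]) hb
  · intro h; exact absurd (Finset.mem_univ _) h

lemma mul_permMat_inv_apply (M : Matrix (Fin n) (Fin n) ℍ[ℝ]) (i j : Fin n) :
    (M * permMat n w⁻¹) i j = M i (w⁻¹ j) := by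
  rw [Matrix.mul_apply]
  rw [Finset.sum_eq_single (w⁻¹ j)]
  · simp [permMat]
  · intro b _ hb
    simp only [permMat, Matrix.of_apply, mul_ite, mul_one, mul_zero, ite_eq_right_iff]
    intro h
    exact absurd h hb
  · intro h; exact absurd (Finset.mem_univ _) h

lemma permMat_conj_apply (M : Matrix (Fin n) (Fin n) ℍ[ℝ]) (i j : Fin n) :
    (permMat n w * M * permMat n w⁻¹) i j = M (w⁻¹ i) (w⁻¹ j) := by
  rw [mul_permMat_inv_apply, permMat_mul_apply]

end Aux

/-- For `w ∈ Sₙ`, the set `V_w = {V upper unitriangular over ℍ : (P_w V P_w⁻¹)ᵗ is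
upper unitriangular}` is a subgroup of the group of upper unitriangular quaternionic
matrices (realized as a subgroup of the units of the matrix ring), and its dimension
as a real manifold is `4·ℓ(w)`: the subspace `W` of matrices `A` with `1 + A ∈ V_w`
is an ℝ-submodule of real dimension `4·ℓ(w)` (recall `ℍ` is 4-dimensional over ℝ). -/
theorem Vw_subgroup_and_dimension (n : ℕ) (w : Equiv.Perm (Fin n)) :
    ∃ H : Subgroup (Matrix (Fin n) (Fin n) ℍ[ℝ])ˣ,
      (∀ g : (Matrix (Fin n) (Fin n) ℍ[ℝ])ˣ,
        g ∈ H ↔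
          ((∀ i, g.val i i = 1) ∧ (∀ i j : Fin n, j < i → g.val i j = 0) ∧
            (∀ i, (permMat n w * g.val * permMat n w⁻¹)ᵀ i i = 1) ∧
            (∀ i j : Fin n, j < i → (permMat n w * g.val * permMat n w⁻¹)ᵀ i j = 0))) ∧
      ∃ W : Submodule ℝ (Matrix (Fin n) (Fin n) ℍ[ℝ]),
        (∀ A : Matrix (Fin n) (Fin n) ℍ[ℝ],
          A ∈ W ↔ ∃ g : (Matrix (Fin n) (Fin n) ℍ[ℝ])ˣ, g ∈ H ∧ g.val = 1 + A) ∧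
        Module.finrank ℝ W = 4 * lenPerm n w := by
  refine ⟨Hgrp n w, ?_, Wmod n w, ?_, ?_⟩
  · -- characterization of the subgroup
    intro g
    rw [mem_Hgrp, mem_Wmod]
    constructor
    · intro hg
      refine ⟨?_, ?_, ?_, ?_⟩
      · intro i
        have := hg i i (by simp)
        rw [Matrix.sub_apply, Matrix.one_apply_eq, sub_eq_zero] at this
        exact this
      · intro i j hji
        have := hg i j (fun h => absurd h.1 (not_lt.mpr hji.le))
        rwa [Matrix.sub_apply, Matrix.one_apply_ne (ne_of_gt hji), sub_zero] at this
      · intro i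
        rw [Matrix.transpose_apply, permMat_conj_apply]
        have := hg (w⁻¹ i) (w⁻¹ i) (by simp)
        rw [Matrix.sub_apply, Matrix.one_apply_eq, sub_eq_zero] at this
        exact this
      · intro i j hji
        rw [Matrix.transpose_apply, permMat_conj_apply]
        have hne : w⁻¹ j ≠ w⁻¹ i := fun h => absurd (w⁻¹.injective h) hji.ne
        have := hg (w⁻¹ j) (w⁻¹ i)
          (fun h => absurd (by simpa using h.2) (not_lt.mpr hji.le))
        rwa [Matrix.sub_apply, Matrix.one_apply_ne hne, sub_zero] at this
    · rintro ⟨h1, h2, h3, h4⟩ a b hab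
      rcases lt_trichotomy a b with hlt | rfl | hgt
      · rw [Matrix.sub_apply, Matrix.one_apply_ne hlt.ne, sub_zero]
        have hne : w a ≠ w b := fun h => hlt.ne (w.injective h)
        have hwa : w a < w b := by
          rcases lt_or_gt_of_ne hne with h | h
          · exact h
          · exact absurd ⟨hlt, h⟩ hab
        have := h4 (w b) (w a) hwa
        rw [Matrix.transpose_apply, permMat_conj_apply] at this
        simpa using this
      · rw [Matrix.sub_apply, Matrix.one_apply_eq, sub_eq_zero]
        exact h1 a
      · rw [Matrix.sub_apply, Matrix.one_apply_ne hgt.ne', sub_zero]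
        exact h2 a b hgt
  · -- characterization of the submodule
    intro A
    constructor
    · intro hA
      have hnil : IsNilpotent A :=
        ⟨n, strictUpper_nilpotent (fun a b h => Wmod_strictUpper hA h)⟩
      obtain ⟨u, hu⟩ := hnil.isUnit_one_add
      refine ⟨u, ?_, hu⟩
      rw [mem_Hgrp, hu, add_sub_cancel_left]
      exact hA
    · rintro ⟨g, hgH, hgval⟩
      rw [mem_Hgrp, hgval, add_sub_cancel_left] at hgH
      exact hgH
  · -- dimension computation
    let S : Finset (Fin n × Fin n) :=
      Finset.univ.filter fun pq : Fin n × Fin n => pq.1 < pq.2 ∧ w pq.2 < w pq.1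
    have hcard : S.card = lenPerm n w := by
      unfold lenPerm
      apply Finset.card_nbij' (fun pq => (w pq.2, w pq.1)) (fun pq => (w⁻¹ pq.2, w⁻¹ pq.1))
      · intro pq hpq
        simp only [S, Finset.coe_filter, Finset.mem_filter, Finset.mem_univ, true_and, Set.mem_setOf_eq] at hpq ⊢
        simpa [Equiv.symm_apply_apply] using ⟨hpq.2, hpq.1⟩
      · intro pq hpq
        simp only [S, Finset.coe_filter, Finset.mem_filter, Finset.mem_univ, true_and, Set.mem_setOf_eq] at hpq ⊢
        simpa [Equiv.apply_symm_apply] using ⟨hpq.2, hpq.1⟩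
      · intro pq _
        simp [Equiv.symm_apply_apply]
      · intro pq _
        simp [Equiv.apply_symm_apply]
    let e : (Wmod n w) ≃ₗ[ℝ] ({pq : Fin n × Fin n // pq ∈ S} → ℍ[ℝ]) :=
      { toFun := fun x p => x.1 p.1.1 p.1.2
        map_add' := fun x y => rfl
        map_smul' := fun c x => rfl
        invFun := fun f =>
          ⟨Matrix.of fun a b =>
            if h : (a, b) ∈ S then f ⟨(a, b), h⟩ else 0, by
            intro a b hab
            rw [Matrix.of_apply, dif_neg]
            simp only [S, Finset.mem_filter, Finset.mem_univ, true_and]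
            exact hab⟩
        left_inv := by
          intro x
          apply Subtype.ext
          refine Matrix.ext fun a b => ?_
          show (if h : (a, b) ∈ S then x.1 a b else 0) = x.1 a b
          by_cases h : (a, b) ∈ S
          · rw [dif_pos h]
          · rw [dif_neg h]
            refine (x.2 a b ?_).symm
            intro hab
            exact h (by simp only [S, Finset.mem_filter, Finset.mem_univ, true_and]; exact hab)
        right_inv := by
          intro f
          funext p
          show (if h : (p.1.1, p.1.2) ∈ S then f ⟨(p.1.1, p.1.2), h⟩ else 0) = f p
          rw [dif_pos p.2] }
    rw [e.finrank_eq, Module.finrank_pi_fintype, Finset.sum_const]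
    rw [Quaternion.finrank_eq_four, Finset.card_univ, Fintype.card_coe, hcard,
      smul_eq_mul, mul_comm]
end
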